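/- arXiv:1402.5707 — 3 statements merged into one kernel-verified Lean document; each statement's English description precedes it below -/
import Mathlib

section
/- Let ℓ be an odd prime and let A ∈ 1 + ℓ·M_d(ℤ_ℓ). If every eigenvalue of A is a root of unity, then A is unipotent. -/
/-!
The eigenvalues of `A = 1 + p B` are `μ = 1 + p x` with `x` an eigenvalue of `B`, so `x` is
integral over `ℤ_p`, and in the integral closure `S` of `ℤ_p` each eigenvalue is a root of unity
with `p ∣ μ - 1`, where `p` is not a unit of `S` (integral extensions are local homomorphisms).
Such a `μ` is `1`. If `μ ^ n = 1` with `p ∤ n`, then `(μ - 1) (1 + μ + ⋯ + μ ^ (n - 1)) = 0` and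
the second factor is `≡ n` modulo `p`, a unit, hence nonzero. If `μ ^ p = 1` but `μ ≠ 1`, then
`p = Φ_p(1) = ∏ (1 - ζ)` over the primitive `p`-th roots `ζ`, which are powers of `μ`; each factor
is divisible by `p`, so `p ^ (p - 1) ∣ p`, and `p - 1 ≥ 2` makes `p` a unit. So the characteristic
polynomial of `A` is `(X - 1) ^ d`, and Cayley–Hamilton finishes.
-/

open Polynomial

theorem spectrum.sub_one_div_mem_of_mem_one_add_smul {K A : Type*} [Field K] [Ring A]
    [Algebra K A] {c : K} (hc : c ≠ 0) {b : A} {μ : K} (h : μ ∈ spectrum K (1 + c • b)) :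
    (μ - 1) / c ∈ spectrum K b := by
  rw [← spectrum.smul_mem_smul_iff (r := Units.mk0 c hc), ← spectrum.add_mem_add_iff (s := 1)]
  simpa [Units.smul_def, mul_div_cancel₀ _ hc] using h

theorem Matrix.isIntegral_of_mem_spectrum_map {n R K : Type*} [Fintype n] [DecidableEq n]
    [CommRing R] [Field K] [Algebra R K] (M : Matrix n n R) {x : K}
    (hx : x ∈ spectrum K (M.map (algebraMap R K))) : IsIntegral R x := by
  refine ⟨M.charpoly, M.charpoly_monic, ?_⟩
  rw [← eval_map, ← Matrix.charpoly_map]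
  exact Matrix.mem_spectrum_iff_isRoot_charpoly.mp hx

section PrincipalUnits

variable {S : Type*} [CommRing S] [IsDomain S] {p : ℕ} {μ : S}

theorem eq_one_of_dvd_sub_one_of_pow_eq_one_of_isUnit {n : ℕ} (hn : IsUnit (n : S))
    (hpS : ¬IsUnit (p : S)) (hμ : (p : S) ∣ μ - 1) (h : μ ^ n = 1) : μ = 1 := by
  have hsum : (p : S) ∣ (∑ i ∈ Finset.range n, μ ^ i) - n := by
    rw [show (n : S) = ∑ _i ∈ Finset.range n, (1 : S) by simp, ← Finset.sum_sub_distrib]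
    exact Finset.dvd_sum fun i _ => hμ.trans (sub_one_dvd_pow_sub_one μ i)
  have hsum0 : ∑ i ∈ Finset.range n, μ ^ i ≠ 0 := fun h0 =>
    hpS (isUnit_of_dvd_unit (by simpa [h0] using hsum) hn)
  have hgeom : (μ - 1) * ∑ i ∈ Finset.range n, μ ^ i = 0 := by rw [mul_geom_sum, h, sub_self]
  exact sub_eq_zero.mp ((mul_eq_zero.mp hgeom).resolve_right hsum0)

variable [hp : Fact p.Prime]

theorem eq_one_of_dvd_sub_one_of_pow_prime_eq_one (hp2 : p ≠ 2) (hpS : ¬IsUnit (p : S))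
    (hμ : (p : S) ∣ μ - 1) (h : μ ^ p = 1) : μ = 1 := by
  by_contra hne
  have hprim : IsPrimitiveRoot μ p := orderOf_eq_prime h hne ▸ IsPrimitiveRoot.orderOf μ
  have hdvd : (p : S) ^ (p - 1) ∣ p := by
    calc (p : S) ^ (p - 1) = ∏ _ζ ∈ primitiveRoots p S, (p : S) := by
          rw [Finset.prod_const, hprim.card_primitiveRoots, Nat.totient_prime hp.out]
      _ ∣ ∏ ζ ∈ primitiveRoots p S, (1 - ζ) := by
          refine Finset.prod_dvd_prod_of_dvd _ _ fun ζ hζ => ?_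
          obtain ⟨i, -, rfl⟩ := hprim.eq_pow_of_pow_eq_one
            ((mem_primitiveRoots hp.out.pos).mp hζ).pow_eq_one
          rw [← dvd_neg, neg_sub]
          exact hμ.trans (sub_one_dvd_pow_sub_one μ i)
      _ = p := by
          rw [← eval_one_cyclotomic_prime (R := S) (p := p),
            cyclotomic_eq_prod_X_sub_primitiveRoots hprim, eval_prod]
          simp
  obtain ⟨c, hc⟩ := (pow_dvd_pow (p : S) (show 2 ≤ p - 1 by
    have := hp.out.two_le; omega)).trans hdvd
  have hp0 : (p : S) ≠ 0 := fun h0 => hne (sub_eq_zero.mp (by simpa [h0] using hμ))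
  exact hpS (.of_mul_eq_one c (mul_left_cancel₀ hp0 (by linear_combination hc.symm)))

theorem eq_one_of_dvd_sub_one_of_pow_prime_pow_eq_one (hp2 : p ≠ 2) (hpS : ¬IsUnit (p : S))
    (hμ : (p : S) ∣ μ - 1) {k : ℕ} (h : μ ^ p ^ k = 1) : μ = 1 := by
  induction k generalizing μ with
  | zero => simpa using h
  | succ k ih =>
    rw [pow_succ', pow_mul] at h
    exact eq_one_of_dvd_sub_one_of_pow_prime_eq_one hp2 hpS hμ
      (ih (hμ.trans (sub_one_dvd_pow_sub_one μ p)) h)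

theorem eq_one_of_dvd_sub_one_of_pow_eq_one [Algebra ℤ_[p] S] (hp2 : p ≠ 2)
    (hpS : ¬IsUnit (p : S)) (hμ : (p : S) ∣ μ - 1) {n : ℕ} (hn : n ≠ 0) (h : μ ^ n = 1) :
    μ = 1 := by
  obtain ⟨k, m, hpm, rfl⟩ := Nat.exists_eq_pow_mul_and_not_dvd hn p hp.out.ne_one
  have hm : IsUnit (m : S) := by
    rw [← map_natCast (algebraMap ℤ_[p] S)]
    refine (PadicInt.isUnit_iff.mpr ?_).map _
    exact PadicInt.norm_natCast_eq_one_iff.mpr ((Nat.Prime.coprime_iff_not_dvd hp.out).mpr hpm)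
  refine eq_one_of_dvd_sub_one_of_pow_prime_pow_eq_one hp2 hpS hμ (k := k) ?_
  exact eq_one_of_dvd_sub_one_of_pow_eq_one_of_isUnit hm hpS
    (hμ.trans (sub_one_dvd_pow_sub_one μ _)) (by rw [← pow_mul, h])

end PrincipalUnits

theorem eq_one_of_pow_eq_one_of_isIntegral {p : ℕ} [Fact p.Prime] (hp2 : p ≠ 2)
    {K : Type*} [Field K] [Algebra ℤ_[p] K] [FaithfulSMul ℤ_[p] K] {μ : K}
    (hμ : IsIntegral ℤ_[p] ((μ - 1) / p)) {n : ℕ} (hn : n ≠ 0) (h : μ ^ n = 1) : μ = 1 := by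
  let S := integralClosure ℤ_[p] K
  have : FaithfulSMul ℤ_[p] S := (faithfulSMul_iff_algebraMap_injective _ _).mpr <|
    Function.Injective.of_comp (f := ((↑) : S → K)) (FaithfulSMul.algebraMap_injective ℤ_[p] K)
  have hpS : ¬IsUnit (p : S) := by
    rw [← map_natCast (algebraMap ℤ_[p] S), isUnit_map_iff]
    exact PadicInt.p_nonunit
  have : CharZero K :=
    charZero_of_injective_algebraMap (FaithfulSMul.algebraMap_injective ℤ_[p] K)
  have hp0 : (p : K) ≠ 0 := Nat.cast_ne_zero.mpr (Fact.out : p.Prime).ne_zero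
  let x : S := ⟨(μ - 1) / p, hμ⟩
  have hμx : μ = ((1 + p * x : S) : K) := by
    simp only [x, Subalgebra.coe_add, Subalgebra.coe_one, Subalgebra.coe_mul,
      SubringClass.coe_natCast]
    rw [mul_div_cancel₀ _ hp0]
    ring
  rw [hμx] at h ⊢
  exact congrArg Subtype.val
    (eq_one_of_dvd_sub_one_of_pow_eq_one hp2 hpS ⟨x, by ring⟩ hn
      (Subtype.ext (by simpa using h)))

theorem Polynomial.Splits.eq_X_sub_C_pow_of_forall_mem_roots {R : Type*} [CommRing R]
    [IsDomain R] {f : R[X]} {a : R} (hf : Splits f) (hm : f.Monic) (h : ∀ μ ∈ f.roots, μ = a) :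
    f = (X - C a) ^ f.natDegree := by
  have hroots : f.roots = Multiset.replicate f.natDegree a := by
    rw [hf.natDegree_eq_card_roots]
    exact Multiset.eq_replicate_card.mpr h
  conv_lhs => rw [hf.eq_prod_roots_of_monic hm, hroots]
  simp

theorem Matrix.sub_scalar_pow_card_eq_zero_of_forall_mem_roots {n R K : Type*} [Fintype n]
    [DecidableEq n] [CommRing R] [Field K] [IsAlgClosed K] [Algebra R K] [FaithfulSMul R K]
    (M : Matrix n n R) {a : R}
    (h : ∀ μ ∈ (M.map (algebraMap R K)).charpoly.roots, μ = algebraMap R K a) :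
    (M - scalar n a) ^ Fintype.card n = 0 := by
  have hK := (IsAlgClosed.splits _).eq_X_sub_C_pow_of_forall_mem_roots
    (M.map (algebraMap R K)).charpoly_monic h
  rw [Matrix.charpoly_natDegree_eq_dim, Matrix.charpoly_map] at hK
  have hR : M.charpoly = (X - C a) ^ Fintype.card n := by
    apply Polynomial.map_injective _ (FaithfulSMul.algebraMap_injective R K)
    simpa using hK
  simpa [hR, Matrix.algebraMap_eq_diagonal, Pi.algebraMap_def] using M.aeval_self_charpoly

/-- Let `ℓ` be an odd prime and `A ∈ 1 + ℓ·M_d(ℤ_ℓ)`.  If every eigenvalue of `A`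
(in an algebraic closure of `ℚ_ℓ`) is a root of unity, then `A` is unipotent. -/
theorem unipotent_of_roots_of_unity_odd {p : ℕ} [Fact p.Prime] (hp : p ≠ 2)
    {d : ℕ} (A B : Matrix (Fin d) (Fin d) ℤ_[p])
    (hA : A = 1 + (p : ℤ_[p]) • B)
    (hroots : ∀ μ ∈ (((A.map ((algebraMap ℚ_[p] (AlgebraicClosure ℚ_[p])).comp
        (PadicInt.Coe.ringHom))).charpoly).roots),
      ∃ n : ℕ, 0 < n ∧ μ ^ n = 1) :
    (A - 1) ^ d = 0 := by
  set K := AlgebraicClosure ℚ_[p]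
  have hmap : (algebraMap ℚ_[p] K).comp PadicInt.Coe.ringHom = algebraMap ℤ_[p] K := rfl
  rw [hmap] at hroots
  have : FaithfulSMul ℤ_[p] K := (faithfulSMul_iff_algebraMap_injective _ _).mpr <|
    (algebraMap ℚ_[p] K).injective.comp Subtype.coe_injective
  have hp0 : (p : K) ≠ 0 := Nat.cast_ne_zero.mpr (Fact.out : p.Prime).ne_zero
  have hA' : A.map (algebraMap ℤ_[p] K) = 1 + (p : K) • B.map (algebraMap ℤ_[p] K) := by
    ext i j
    by_cases hij : i = j <;> simp [hA, hij]
  have hunip :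
      ∀ μ ∈ (A.map (algebraMap ℤ_[p] K)).charpoly.roots, μ = algebraMap ℤ_[p] K 1 := by
    intro μ hμ
    obtain ⟨n, hn, hμn⟩ := hroots μ hμ
    have hspec : μ ∈ spectrum K (A.map (algebraMap ℤ_[p] K)) :=
      Matrix.mem_spectrum_iff_isRoot_charpoly.mpr (isRoot_of_mem_roots hμ)
    rw [hA'] at hspec
    rw [map_one]
    exact eq_one_of_pow_eq_one_of_isIntegral hp (B.isIntegral_of_mem_spectrum_map
      (spectrum.sub_one_div_mem_of_mem_one_add_smul hp0 hspec)) hn.ne' hμn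
  simpa using A.sub_scalar_pow_card_eq_zero_of_forall_mem_roots hunip
end

section
/- Let A ∈ 1 + 4·M_d(ℤ₂). If every eigenvalue of A is a root of unity, then A is unipotent. -/
/-!
If `A = 1 + 4 • B` and `μ` is an eigenvalue of `A`, then `(μ - 1) / 4` is an eigenvalue of `B`,
hence integral over `ℤ₂`. A root of unity `μ ≠ 1` has a power `ζ` of prime order `ℓ`, and
`(ζ - 1) / 4` is still integral. Summing `(ζ ^ j - 1) / 4` over `j < ℓ` shows that `ℓ / 4` is
integral, i.e. `4 ∣ ℓ`, which is absurd. So every eigenvalue of `A` is `1`, its characteristic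
polynomial is `(X - 1) ^ d`, and Cayley–Hamilton gives `(A - 1) ^ d = 0`.
-/

open Polynomial

theorem IsIntegral.pow_sub_one_div {R L : Type*} [CommRing R] [Field L] [Algebra R L] {ζ q : L}
    (h : IsIntegral R ((ζ - 1) / q)) (hζ : IsIntegral R ζ) (j : ℕ) :
    IsIntegral R ((ζ ^ j - 1) / q) := by
  rw [← geom_sum_mul, mul_div_assoc]
  exact (IsIntegral.sum _ fun i _ => hζ.pow i).mul h

namespace PadicInt

variable {p : ℕ} [Fact p.Prime] {L : Type*} [Field L] [Algebra ℚ_[p] L] [Algebra ℤ_[p] L]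
  [IsScalarTower ℤ_[p] ℚ_[p] L]

theorem pow_dvd_of_isIntegral_natCast_div {k m : ℕ}
    (h : IsIntegral ℤ_[p] ((k : L) / (p : L) ^ m)) : p ^ m ∣ k := by
  have hq : (k : L) / (p : L) ^ m = algebraMap ℚ_[p] L ((k : ℚ_[p]) / (p : ℚ_[p]) ^ m) := by
    simp
  rw [hq, ← IsScalarTower.coe_toAlgHom' ℤ_[p] ℚ_[p] L,
    isIntegral_algHom_iff _ (algebraMap ℚ_[p] L).injective,
    IsIntegrallyClosed.isIntegral_iff] at h
  obtain ⟨y, hy⟩ := h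
  have hp : (p : ℚ_[p]) ^ m ≠ 0 :=
    pow_ne_zero _ (Nat.cast_ne_zero.mpr (Fact.out : p.Prime).ne_zero)
  have hk : ‖((k : ℤ) : ℚ_[p])‖ ≤ (p : ℝ) ^ (-m : ℤ) :=
    calc ‖((k : ℤ) : ℚ_[p])‖ = ‖(y : ℚ_[p])‖ * ‖(p : ℚ_[p]) ^ m‖ := by
          rw [← norm_mul, show (y : ℚ_[p]) = k / (p : ℚ_[p]) ^ m from hy,
            div_mul_cancel₀ _ hp]
          simp
      _ ≤ 1 * (p : ℝ) ^ (-m : ℤ) := by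
          rw [Padic.norm_p_pow]; gcongr; exact y.norm_le_one
      _ = (p : ℝ) ^ (-m : ℤ) := one_mul _
  exact_mod_cast (Padic.norm_int_le_pow_iff_dvd _ _).mp hk

theorem pow_dvd_of_isPrimitiveRoot {ζ : L} {k m : ℕ} (hζ : IsPrimitiveRoot ζ k) (hk : 1 < k)
    (h : IsIntegral ℤ_[p] ((ζ - 1) / (p : L) ^ m)) : p ^ m ∣ k := by
  apply pow_dvd_of_isIntegral_natCast_div (L := L)
  have hζi : IsIntegral ℤ_[p] ζ := .of_pow (by omega) (hζ.pow_eq_one ▸ isIntegral_one)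
  have hsum : ∑ j ∈ Finset.range k, (ζ ^ j - 1) / (p : L) ^ m = -((k : L) / (p : L) ^ m) := by
    rw [← Finset.sum_div, Finset.sum_sub_distrib, hζ.geom_sum_eq_zero hk]
    simp [neg_div]
  rw [← neg_neg ((k : L) / _), ← hsum]
  exact (IsIntegral.sum _ fun j _ => h.pow_sub_one_div hζi j).neg

theorem eq_one_of_pow_eq_one_of_isIntegral {μ : L} {n m : ℕ} (hn : 0 < n) (hμ : μ ^ n = 1)
    (hm : 2 ≤ m) (h : IsIntegral ℤ_[p] ((μ - 1) / (p : L) ^ m)) : μ = 1 := by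
  by_contra hne
  have hN : orderOf μ ≠ 0 :=
    (orderOf_pos_iff.mpr (isOfFinOrder_iff_pow_eq_one.mpr ⟨n, hn, hμ⟩)).ne'
  obtain ⟨ℓ, hℓ, hℓN⟩ := Nat.exists_prime_and_dvd fun h1 => hne (orderOf_eq_one_iff.mp h1)
  have hζ := IsPrimitiveRoot.orderOf (μ ^ (orderOf μ / ℓ))
  rw [orderOf_pow_orderOf_div hN hℓN] at hζ
  have hμi : IsIntegral ℤ_[p] μ := .of_pow hn (hμ ▸ isIntegral_one)
  have hdvd := pow_dvd_of_isPrimitiveRoot hζ hℓ.one_lt (h.pow_sub_one_div hμi _)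
  rcases hℓ.eq_one_or_self_of_dvd _ hdvd with h1 | hself
  · exact (Nat.one_lt_pow (by omega) (Fact.out : p.Prime).one_lt).ne' h1
  · exact Nat.Prime.not_prime_pow hm (hself ▸ hℓ)

end PadicInt

namespace Matrix

variable {n : Type*} [Fintype n] [DecidableEq n]

theorem isIntegral_of_isRoot_charpoly_map {R A : Type*} [CommRing R] [CommRing A] [Algebra R A]
    (M : Matrix n n R) {x : A} (hx : (M.map (algebraMap R A)).charpoly.IsRoot x) :
    IsIntegral R x :=
  ⟨M.charpoly, M.charpoly_monic, by rwa [← eval_map, ← charpoly_map]⟩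

theorem isRoot_charpoly_of_isRoot_charpoly_one_add_smul {K : Type*} [Field K] (M : Matrix n n K)
    {c μ : K} (hc : c ≠ 0) (hμ : (1 + c • M).charpoly.IsRoot μ) :
    M.charpoly.IsRoot ((μ - 1) / c) := by
  have hfactor : scalar n μ - (1 + c • M) = c • (scalar n ((μ - 1) / c) - M) := by
    ext i j
    rcases eq_or_ne i j with rfl | h
    · simp only [scalar_apply, sub_apply, diagonal_apply_eq, add_apply, one_apply_eq, smul_apply,
        smul_eq_mul]
      field_simp
      ring
    · simp [h, one_apply_ne h]
  rw [IsRoot, eval_charpoly, hfactor, det_smul] at hμ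
  rw [IsRoot, eval_charpoly]
  exact (mul_eq_zero.mp hμ).resolve_left (pow_ne_zero _ hc)

theorem charpoly_eq_X_sub_C_pow {K : Type*} [Field K] (M : Matrix n n K) (a : K)
    (hM : M.charpoly.Splits) (h : ∀ μ ∈ M.charpoly.roots, μ = a) :
    M.charpoly = (X - C a) ^ Fintype.card n := by
  have hroots : M.charpoly.roots = Multiset.replicate (Fintype.card n) a :=
    Multiset.eq_replicate.mpr
      ⟨by rw [← hM.natDegree_eq_card_roots, charpoly_natDegree_eq_dim], h⟩
  rw [hM.eq_prod_roots_of_monic M.charpoly_monic, hroots, Multiset.map_replicate,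
    Multiset.prod_replicate]

theorem sub_scalar_pow_card_eq_zero {K : Type*} [Field K] (M : Matrix n n K) (a : K)
    (hM : M.charpoly.Splits) (h : ∀ μ ∈ M.charpoly.roots, μ = a) :
    (M - scalar n a) ^ Fintype.card n = 0 := by
  simpa [charpoly_eq_X_sub_C_pow M a hM h, algebraMap_eq_diagonal, Pi.algebraMap_def,
    scalar_apply] using M.aeval_self_charpoly

end Matrix

/-- Let `A ∈ 1 + 4·M_d(ℤ₂)`.  If every eigenvalue of `A`
(in an algebraic closure of `ℚ₂`) is a root of unity, then `A` is unipotent. -/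
theorem unipotent_of_roots_of_unity_two
    {d : ℕ} (A B : Matrix (Fin d) (Fin d) ℤ_[2])
    (hA : A = 1 + (4 : ℤ_[2]) • B)
    (hroots : ∀ μ ∈ (((A.map ((algebraMap ℚ_[2] (AlgebraicClosure ℚ_[2])).comp
        (PadicInt.Coe.ringHom))).charpoly).roots),
      ∃ n : ℕ, 0 < n ∧ μ ^ n = 1) :
    (A - 1) ^ d = 0 := by
  set f := (algebraMap ℚ_[2] (AlgebraicClosure ℚ_[2])).comp PadicInt.Coe.ringHom
  have hf : f = algebraMap ℤ_[2] (AlgebraicClosure ℚ_[2]) :=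
    (IsScalarTower.algebraMap_eq _ ℚ_[2] _).symm
  have hAf : A.map f = 1 + (4 : AlgebraicClosure ℚ_[2]) • B.map f := by
    rw [hA, Matrix.map_add _ (map_add f), Matrix.map_one f f.map_zero f.map_one,
      Matrix.map_smul' _ _ _ (map_mul f), map_ofNat]
  have hone : ∀ μ ∈ (A.map f).charpoly.roots, μ = 1 := by
    intro μ hμ
    obtain ⟨n, hn, hμn⟩ := hroots μ hμ
    refine PadicInt.eq_one_of_pow_eq_one_of_isIntegral (p := 2) hn hμn le_rfl ?_
    have hroot := (B.map f).isRoot_charpoly_of_isRoot_charpoly_one_add_smul (by norm_num)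
      (hAf ▸ isRoot_of_mem_roots hμ)
    rw [hf] at hroot
    exact_mod_cast B.isIntegral_of_isRoot_charpoly_map hroot
  have h0 := (A.map f).sub_scalar_pow_card_eq_zero 1 (IsAlgClosed.splits _) hone
  rw [Fintype.card_fin, map_one] at h0
  have hf_inj : Function.Injective f :=
    (algebraMap ℚ_[2] _).injective.comp Subtype.coe_injective
  apply Matrix.map_injective hf_inj
  simpa [← RingHom.mapMatrix_apply] using h0
end

section
/- Any finite subgroup of GL_d(ℤ₂) maps injectively under reduction into GL_d(ℤ/4ℤ); in particular its order divides |GL_d(ℤ/4ℤ)|. -/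
/-!
If `A ∈ GL_d(ℤ₂)` has finite order and `A ≡ 1 mod 4`, some power of `A` has prime order `q`, so it
suffices to treat `A^q = 1`. If `2^k ∣ A - 1`, write `A - 1 = 2^k N`; since
`∑_{i<q} A^i ≡ q mod 4` and `(∑_{i<q} A^i)(A - 1) = A^q - 1 = 0`, one gets `qN ≡ 0 mod 4`, whence
`2 ∣ N`. Thus `A - 1` is divisible by every power of `2`, so `A = 1` by Krull's intersection
theorem. Hence reduction mod 4 is injective on finite subgroups, and Lagrange gives the divisibility.
-/

open Matrix
open Finset IsLocalRing PadicInt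

section Ring

variable {S : Type*} [Ring S]

theorem dvd_geom_sum_sub_natCast {a B : S} (h : a ∣ B - 1) (n : ℕ) :
    a ∣ ∑ i ∈ range n, B ^ i - n := by
  have hsum : ∑ i ∈ range n, B ^ i - n = ∑ i ∈ range n, (B ^ i - 1) := by
    simp [sum_sub_distrib]
  rw [hsum]
  exact dvd_sum fun i _ => h.trans (sub_one_dvd_pow_sub_one B i)

theorem two_pow_succ_dvd_sub_one (h2 : IsLeftRegular (2 : S)) {B : S} {q k : ℕ}
    (hq : q.Prime) (hBq : B ^ q = 1) (h4 : 4 ∣ B - 1) (hk : 2 ^ k ∣ B - 1) :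
    2 ^ (k + 1) ∣ B - 1 := by
  obtain ⟨N, hN⟩ := hk
  obtain ⟨E, hE⟩ := dvd_geom_sum_sub_natCast h4 q
  have hgeom : (∑ i ∈ range q, B ^ i) * (B - 1) = 0 := by rw [geom_sum_mul, hBq, sub_self]
  have hqN : (q : S) * N = -(4 * E * N) := by
    have hcomm : Commute ((2 : S) ^ k) (q + 4 * E) := (Commute.ofNat_left 2 _).pow_left k
    have : (2 : S) ^ k * ((q : S) * N + 4 * E * N) = 2 ^ k * 0 := by
      rw [sub_eq_iff_eq_add'.mp hE, hN] at hgeom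
      rw [mul_zero, ← hgeom, ← add_mul, ← mul_assoc, hcomm.eq, mul_assoc]
    rw [← add_eq_zero_iff_eq_neg]
    exact h2.pow k this
  suffices (2 : S) ∣ N by
    obtain ⟨c, rfl⟩ := this
    exact ⟨c, by rw [hN, pow_succ, mul_assoc]⟩
  rcases hq.eq_two_or_odd' with rfl | ⟨m, rfl⟩
  · refine ⟨-(E * N), h2 ?_⟩
    change 2 * N = 2 * _
    push_cast at hqN
    rw [hqN]
    noncomm_ring
  · refine ⟨-(2 * E * N) - m * N, ?_⟩
    calc N = (2 * m + 1 : ℕ) * N - 2 * (m * N) := by push_cast; noncomm_ring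
      _ = 2 * (-(2 * E * N) - m * N) := by rw [hqN]; noncomm_ring

theorem two_pow_dvd_sub_one_of_pow_prime_eq_one (h2 : IsLeftRegular (2 : S)) {B : S} {q : ℕ}
    (hq : q.Prime) (hBq : B ^ q = 1) (h4 : 4 ∣ B - 1) (k : ℕ) : 2 ^ k ∣ B - 1 := by
  induction k with
  | zero => rw [pow_zero]; exact one_dvd _
  | succ k ih => exact two_pow_succ_dvd_sub_one h2 hq hBq h4 ih

end Ring

theorem eq_zero_of_forall_pow_dvd {R S : Type*} [CommRing R] [IsNoetherianRing R] [IsLocalRing R]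
    [Ring S] [Algebra R S] [Module.Finite R S] {r : R} (hr : r ∈ maximalIdeal R) {x : S}
    (h : ∀ k, algebraMap R S r ^ k ∣ x) : x = 0 :=
  IsHausdorff.haus (I := maximalIdeal R) inferInstance x fun k => by
    obtain ⟨y, rfl⟩ := h k
    rw [SModEq.zero, ← map_pow, ← Algebra.smul_def]
    exact Submodule.smul_mem_smul (Ideal.pow_mem_pow hr k) Submodule.mem_top

namespace Matrix

variable {n : Type*} [Fintype n] [DecidableEq n]

theorem isLeftRegular_two {R : Type*} [CommRing R] [IsDomain R] [NeZero (2 : R)] :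
    IsLeftRegular (2 : Matrix n n R) := by
  have h2 : IsSMulRegular (Matrix n n R) (2 : R) := (IsRegular.of_ne_zero two_ne_zero).left.matrix
  rw [← map_ofNat (algebraMap R (Matrix n n R)) 2]
  exact fun x y h => h2 (by simpa only [Algebra.smul_def] using h)

theorem pow_dvd_of_map_toZModPow_eq_zero {p : ℕ} [Fact p.Prime] {k : ℕ} {M : Matrix n n ℤ_[p]}
    (hM : M.map (toZModPow k) = 0) : (p : Matrix n n ℤ_[p]) ^ k ∣ M := by
  have hentry : ∀ i j, (p : ℤ_[p]) ^ k ∣ M i j := fun i j => by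
    rw [← Ideal.mem_span_singleton, ← ker_toZModPow]
    exact congr_fun₂ hM i j
  choose N hN using hentry
  refine ⟨Matrix.of N, ?_⟩
  rw [← map_natCast (algebraMap ℤ_[p] (Matrix n n ℤ_[p])), ← map_pow, ← Algebra.smul_def]
  ext i j
  simp [hN]

end Matrix

namespace Matrix.GeneralLinearGroup

variable {n : Type*} [Fintype n] [DecidableEq n]

theorem eq_one_of_pow_prime_eq_one_of_map_toZModPow_eq_one {A : GL n ℤ_[2]} {q : ℕ}
    (hq : q.Prime) (hAq : A ^ q = 1) (hA : map (toZModPow 2) A = 1) : A = 1 := by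
  set B : Matrix n n ℤ_[2] := ↑A
  have hBq : B ^ q = 1 := by rw [← Units.val_pow_eq_pow_val, hAq, Units.val_one]
  have h4 : 4 ∣ B - 1 := by
    have hB : B.map (toZModPow 2) = 1 := congrArg Units.val hA
    have := pow_dvd_of_map_toZModPow_eq_zero (k := 2) (M := B - 1) (by simp [Matrix.map_sub, hB])
    norm_num at this
    exact this
  have h2mem : (2 : ℤ_[2]) ∈ maximalIdeal ℤ_[2] := by
    rw [maximalIdeal_eq_span_p]
    exact_mod_cast Ideal.mem_span_singleton_self _
  refine Units.ext (sub_eq_zero.mp (eq_zero_of_forall_pow_dvd h2mem fun k => ?_))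
  rw [map_ofNat]
  exact two_pow_dvd_sub_one_of_pow_prime_eq_one isLeftRegular_two hq hBq h4 k

theorem eq_one_of_isOfFinOrder_of_map_toZModPow_eq_one {A : GL n ℤ_[2]} (hfin : IsOfFinOrder A)
    (hA : map (toZModPow 2) A = 1) : A = 1 := by
  by_contra hne
  set q := (orderOf A).minFac
  have hq : q.Prime := Nat.minFac_prime (orderOf_eq_one_iff.not.mpr hne)
  have hord : orderOf (A ^ (orderOf A / q)) = q :=
    orderOf_pow_orderOf_div hfin.orderOf_pos.ne' (Nat.minFac_dvd _)
  have hpow : A ^ (orderOf A / q) = 1 :=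
    eq_one_of_pow_prime_eq_one_of_map_toZModPow_eq_one hq
      (by simpa only [hord] using pow_orderOf_eq_one (A ^ (orderOf A / q)))
      (by rw [map_pow, hA, one_pow])
  rw [hpow, orderOf_one] at hord
  exact hq.one_lt.ne hord

end Matrix.GeneralLinearGroup

/-- Any finite subgroup of `GL_d(ℤ₂)` maps injectively under reduction into
`GL_d(ℤ/4ℤ)`; in particular its order divides `|GL_d(ℤ/4ℤ)|`. -/
theorem finite_subgroup_embeds_mod_four
    {d : ℕ} (H : Subgroup (GL (Fin d) ℤ_[2])) (hH : Finite H) :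
    Set.InjOn (Matrix.GeneralLinearGroup.map (n := Fin d)
        (PadicInt.toZModPow (p := 2) 2))
      (H : Set (GL (Fin d) ℤ_[2])) ∧
    Nat.card H ∣ Nat.card (GL (Fin d) (ZMod (2 ^ 2))) := by
  set ψ := (GeneralLinearGroup.map (n := Fin d) (toZModPow (p := 2) 2)).comp H.subtype
  have hψ : Function.Injective ψ := (injective_iff_map_eq_one ψ).mpr fun g hg =>
    Subtype.ext (GeneralLinearGroup.eq_one_of_isOfFinOrder_of_map_toZModPow_eq_one
      (H.subtype.isOfFinOrder (isOfFinOrder_of_finite g)) hg)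
  exact ⟨Set.injOn_iff_injective.mpr hψ, Subgroup.card_dvd_of_injective ψ hψ⟩
end
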